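/- arXiv:0911.0369 — 2 statements merged into one kernel-verified Lean document; each statement's English description precedes it below -/
import Mathlib

section
/- Let T > 0, let c₀, c₁, c₂, c₃, C ≥ 0 and d > 0. Then there exist k₀ ≥ 0 and C' ≥ 0, depending only on T, c₀, c₁, c₂, c₃, d and C, such that the following holds: for every k ≥ k₀, every ε > 0, every λ ∈ [0,1], and all continuous nonnegative functions a, v, w, x, y : [0,T] → ℝ satisfying, for all t ∈ [0,T], both (i) ½·a(t) + (k − c₀)·∫₀ᵗ a(s) ds + ε·∫₀ᵗ x(s) ds ≤ C + c₁·λ·∫₀ᵗ (v(s) + w(s)) ds, and (ii) ½·v(t) + (k − c₂)·∫₀ᵗ v(s) ds + ε·∫₀ᵗ y(s) ds + (λd/4)·∫₀ᵗ w(s) ds ≤ C + c₃·∫₀ᵗ a(s) ds, one has sup_{t ∈ [0,T]} a(t) + sup_{t ∈ [0,T]} v(t) + λ·∫₀ᵀ w(s) ds + ε·∫₀ᵀ (x(s) + y(s)) ds ≤ C'. -/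
open Set

set_option maxHeartbeats 1000000 in
/-- the analytic core of the a priori estimate (Lemma 4.1): two coupled
integral inequalities yield, for the weight parameter `k` large enough, a bound
uniform in `ε > 0` and `λ ∈ [0,1]`. -/
theorem stmt_8 (T : ℝ) (hT : 0 < T) (c₀ c₁ c₂ c₃ C : ℝ)
    (hc₀ : 0 ≤ c₀) (hc₁ : 0 ≤ c₁) (hc₂ : 0 ≤ c₂) (hc₃ : 0 ≤ c₃) (hC : 0 ≤ C)
    (d : ℝ) (hd : 0 < d) :
    ∃ k₀ C' : ℝ, 0 ≤ k₀ ∧ 0 ≤ C' ∧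
      ∀ k, k₀ ≤ k → ∀ ε : ℝ, 0 < ε → ∀ lam ∈ Icc (0:ℝ) 1,
      ∀ a v w x y : ℝ → ℝ,
        ContinuousOn a (Icc 0 T) → ContinuousOn v (Icc 0 T) →
        ContinuousOn w (Icc 0 T) → ContinuousOn x (Icc 0 T) →
        ContinuousOn y (Icc 0 T) →
        (∀ t ∈ Icc (0:ℝ) T, 0 ≤ a t) → (∀ t ∈ Icc (0:ℝ) T, 0 ≤ v t) →
        (∀ t ∈ Icc (0:ℝ) T, 0 ≤ w t) → (∀ t ∈ Icc (0:ℝ) T, 0 ≤ x t) →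
        (∀ t ∈ Icc (0:ℝ) T, 0 ≤ y t) →
        (∀ t ∈ Icc (0:ℝ) T,
          (1/2) * a t + (k - c₀) * (∫ s in (0:ℝ)..t, a s) + ε * (∫ s in (0:ℝ)..t, x s)
            ≤ C + c₁ * lam * ∫ s in (0:ℝ)..t, (v s + w s)) →
        (∀ t ∈ Icc (0:ℝ) T,
          (1/2) * v t + (k - c₂) * (∫ s in (0:ℝ)..t, v s) + ε * (∫ s in (0:ℝ)..t, y s)
              + (lam * d / 4) * (∫ s in (0:ℝ)..t, w s)
            ≤ C + c₃ * ∫ s in (0:ℝ)..t, a s) →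
        (⨆ t : Icc (0:ℝ) T, a t) + (⨆ t : Icc (0:ℝ) T, v t)
            + lam * (∫ s in (0:ℝ)..T, w s) + ε * (∫ s in (0:ℝ)..T, (x s + y s))
          ≤ C' := by
  obtain ⟨M, hMdef⟩ : ∃ M : ℝ, M = 8 * c₁ / d + 1 := ⟨_, rfl⟩
  have hM : 0 < M := by rw [hMdef]; positivity
  have hdivnn : 0 ≤ c₁ / M := by positivity
  have hMd : M * d = 8 * c₁ + d := by rw [hMdef]; field_simp
  obtain ⟨A, hAdef⟩ : ∃ A : ℝ, A = 2 * (1 + M) * C := ⟨_, rfl⟩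
  have hA : 0 ≤ A := by rw [hAdef]; positivity
  obtain ⟨V, hVdef⟩ : ∃ V : ℝ, V = 2 * (1 + M) * C / M := ⟨_, rfl⟩
  have hV : 0 ≤ V := by rw [hVdef]; positivity
  obtain ⟨Wb, hWdef⟩ : ∃ Wb : ℝ, Wb = (4 / d) * (C + c₃ * T * A) := ⟨_, rfl⟩
  have hW : 0 ≤ Wb := by rw [hWdef]; positivity
  obtain ⟨Xb, hXdef⟩ : ∃ Xb : ℝ, Xb = C + c₁ * T * V + c₁ * Wb := ⟨_, rfl⟩
  have hX : 0 ≤ Xb := by rw [hXdef]; positivity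
  obtain ⟨Yb, hYdef⟩ : ∃ Yb : ℝ, Yb = C + c₃ * T * A := ⟨_, rfl⟩
  have hY : 0 ≤ Yb := by rw [hYdef]; positivity
  have hMc₃ : 0 ≤ M * c₃ := mul_nonneg hM.le hc₃
  refine ⟨c₀ + c₂ + M * c₃ + c₁ / M, A + V + Wb + (Xb + Yb), by linarith, by linarith, ?_⟩
  intro k hk ε hε lam hlam a v w x y ha hv hw hx hy ha0 hv0 hw0 hx0 hy0 h1 h2
  obtain ⟨hlam0, hlam1⟩ := hlam
  have hkc₀ : c₀ + M * c₃ ≤ k := by linarith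
  have hkc₂ : c₂ + c₁ / M ≤ k := by linarith
  -- integrability helpers
  have hsub : ∀ t ∈ Icc (0:ℝ) T, Icc (0:ℝ) t ⊆ Icc (0:ℝ) T := fun t ht =>
    Icc_subset_Icc le_rfl ht.2
  have hint : ∀ f : ℝ → ℝ, ContinuousOn f (Icc 0 T) → ∀ t ∈ Icc (0:ℝ) T,
      IntervalIntegrable f MeasureTheory.volume 0 t := by
    intro f hf t ht
    have h := hf.mono (hsub t ht)
    rw [← uIcc_of_le ht.1] at h
    exact h.intervalIntegrable
  have hnn : ∀ f : ℝ → ℝ, (∀ s ∈ Icc (0:ℝ) T, 0 ≤ f s) → ∀ t ∈ Icc (0:ℝ) T,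
      0 ≤ ∫ s in (0:ℝ)..t, f s := by
    intro f hf t ht
    exact intervalIntegral.integral_nonneg ht.1 (fun u hu => hf u (hsub t ht hu))
  have hTmem : T ∈ Icc (0:ℝ) T := ⟨hT.le, le_rfl⟩
  -- key pointwise bounds
  have key : ∀ t ∈ Icc (0:ℝ) T, a t ≤ A ∧ v t ≤ V := by
    intro t ht
    have h1t := h1 t ht
    have h2t := h2 t ht
    have hsplit : (∫ s in (0:ℝ)..t, (v s + w s)) =
        (∫ s in (0:ℝ)..t, v s) + ∫ s in (0:ℝ)..t, w s :=
      intervalIntegral.integral_add (hint v hv t ht) (hint w hw t ht)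
    rw [hsplit] at h1t
    have Ia := hnn a ha0 t ht
    have Iv := hnn v hv0 t ht
    have Iw := hnn w hw0 t ht
    have Ix := hnn x hx0 t ht
    have Iy := hnn y hy0 t ht
    have e1 : M * c₃ * (∫ s in (0:ℝ)..t, a s) ≤ (k - c₀) * ∫ s in (0:ℝ)..t, a s := by
      apply mul_le_mul_of_nonneg_right _ Ia; linarith
    have e2 : c₁ * lam * (∫ s in (0:ℝ)..t, v s) ≤ M * (k - c₂) * ∫ s in (0:ℝ)..t, v s := by
      apply mul_le_mul_of_nonneg_right _ Iv
      have h' : c₁ / M * M ≤ (k - c₂) * M := by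
        apply mul_le_mul_of_nonneg_right _ hM.le; linarith
      rw [div_mul_cancel₀ _ hM.ne'] at h'
      have h'' : c₁ * lam ≤ c₁ := by nlinarith
      have h''' : (k - c₂) * M = M * (k - c₂) := by ring
      linarith [h''' ▸ h']
    have e3 : c₁ * lam * (∫ s in (0:ℝ)..t, w s) ≤ M * (lam * d / 4) * ∫ s in (0:ℝ)..t, w s := by
      apply mul_le_mul_of_nonneg_right _ Iw
      have h5 : M * (lam * d / 4) = (8 * c₁ + d) * lam / 4 := by
        rw [← hMd]; ring
      rw [h5]
      nlinarith [mul_nonneg hlam0 hd.le, mul_nonneg hc₁ hlam0]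
    have hεx : 0 ≤ ε * ∫ s in (0:ℝ)..t, x s := mul_nonneg hε.le Ix
    have hεy : 0 ≤ M * (ε * ∫ s in (0:ℝ)..t, y s) :=
      mul_nonneg hM.le (mul_nonneg hε.le Iy)
    have hva : 0 ≤ M * v t := mul_nonneg hM.le (hv0 t ht)
    have hat : 0 ≤ a t := ha0 t ht
    have hvt : 0 ≤ v t := hv0 t ht
    have hh := mul_le_mul_of_nonneg_left h2t hM.le
    constructor
    · rw [hAdef]; linarith
    · have hMv : M * v t ≤ 2 * (1 + M) * C := by linarith
      rw [hVdef, le_div_iff₀ hM]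
      linarith
  have haA : ∀ t ∈ Icc (0:ℝ) T, a t ≤ A := fun t ht => (key t ht).1
  have hvV : ∀ t ∈ Icc (0:ℝ) T, v t ≤ V := fun t ht => (key t ht).2
  -- integral bounds at T
  have IaT : (∫ s in (0:ℝ)..T, a s) ≤ T * A := by
    calc (∫ s in (0:ℝ)..T, a s) ≤ ∫ s in (0:ℝ)..T, A :=
          intervalIntegral.integral_mono_on hT.le (hint a ha T hTmem)
            intervalIntegrable_const haA
    _ = T * A := by rw [intervalIntegral.integral_const, smul_eq_mul, sub_zero]
  have IvT : (∫ s in (0:ℝ)..T, v s) ≤ T * V := by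
    calc (∫ s in (0:ℝ)..T, v s) ≤ ∫ s in (0:ℝ)..T, V :=
          intervalIntegral.integral_mono_on hT.le (hint v hv T hTmem)
            intervalIntegrable_const hvV
    _ = T * V := by rw [intervalIntegral.integral_const, smul_eq_mul, sub_zero]
  have IvTnn := hnn v hv0 T hTmem
  have IwTnn := hnn w hw0 T hTmem
  have IaTnn := hnn a ha0 T hTmem
  have IyTnn := hnn y hy0 T hTmem
  have IxTnn := hnn x hx0 T hTmem
  have h2T := h2 T hTmem
  have hvT : 0 ≤ v T := hv0 T hTmem
  have haT : 0 ≤ a T := ha0 T hTmem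
  have hkc₂' : 0 ≤ (k - c₂) * ∫ s in (0:ℝ)..T, v s := by
    apply mul_nonneg _ IvTnn; linarith
  have hεyT : 0 ≤ ε * ∫ s in (0:ℝ)..T, y s := mul_nonneg hε.le IyTnn
  have hc₃Ia : c₃ * (∫ s in (0:ℝ)..T, a s) ≤ c₃ * (T * A) :=
    mul_le_mul_of_nonneg_left IaT hc₃
  have h4 : (lam * d / 4) * (∫ s in (0:ℝ)..T, w s) ≤ C + c₃ * T * A := by
    have h6 : c₃ * (T * A) = c₃ * T * A := by ring
    linarith
  -- bound on lam * ∫ w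
  have hlw : lam * (∫ s in (0:ℝ)..T, w s) ≤ Wb := by
    have heq : lam * (∫ s in (0:ℝ)..T, w s)
        = (4 / d) * ((lam * d / 4) * (∫ s in (0:ℝ)..T, w s)) := by
      field_simp
    rw [heq, hWdef]
    apply mul_le_mul_of_nonneg_left h4 (by positivity)
  -- bound on ε ∫ y
  have hey : ε * (∫ s in (0:ℝ)..T, y s) ≤ Yb := by
    have hlw4 : 0 ≤ (lam * d / 4) * (∫ s in (0:ℝ)..T, w s) := by
      apply mul_nonneg _ IwTnn; positivity
    rw [hYdef]; linarith
  -- bound on ε ∫ x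
  have h1T := h1 T hTmem
  have hsplitT : (∫ s in (0:ℝ)..T, (v s + w s)) =
      (∫ s in (0:ℝ)..T, v s) + ∫ s in (0:ℝ)..T, w s :=
    intervalIntegral.integral_add (hint v hv T hTmem) (hint w hw T hTmem)
  rw [hsplitT] at h1T
  have hex : ε * (∫ s in (0:ℝ)..T, x s) ≤ Xb := by
    have e1 : c₁ * lam * (∫ s in (0:ℝ)..T, v s) ≤ c₁ * (∫ s in (0:ℝ)..T, v s) := by
      apply mul_le_mul_of_nonneg_right _ IvTnn; nlinarith
    have e1' : c₁ * (∫ s in (0:ℝ)..T, v s) ≤ c₁ * (T * V) :=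
      mul_le_mul_of_nonneg_left IvT hc₁
    have e2 : c₁ * (lam * (∫ s in (0:ℝ)..T, w s)) ≤ c₁ * Wb :=
      mul_le_mul_of_nonneg_left hlw hc₁
    have hkIa : 0 ≤ (k - c₀) * ∫ s in (0:ℝ)..T, a s := by
      apply mul_nonneg _ IaTnn; linarith
    rw [hXdef]; linarith
  -- sum
  have hsplitxy : (∫ s in (0:ℝ)..T, (x s + y s)) =
      (∫ s in (0:ℝ)..T, x s) + ∫ s in (0:ℝ)..T, y s :=
    intervalIntegral.integral_add (hint x hx T hTmem) (hint y hy T hTmem)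
  have hexy : ε * (∫ s in (0:ℝ)..T, (x s + y s)) ≤ Xb + Yb := by
    rw [hsplitxy, mul_add]; linarith
  have hne : Nonempty (Icc (0:ℝ) T) := ⟨⟨0, ⟨le_rfl, hT.le⟩⟩⟩
  have hsupa : (⨆ t : Icc (0:ℝ) T, a t) ≤ A := ciSup_le fun t => haA t t.2
  have hsupv : (⨆ t : Icc (0:ℝ) T, v t) ≤ V := ciSup_le fun t => hvV t t.2
  linarith
end

section
/- Let Γ, Γ₀ > 0 and C₀ ≥ 0, and let f, g, ψ : [0,∞) → [0,∞) be measurable functions with ∫₀^∞ f(s)² ds < ∞, ∫₀^∞ g(s)² ds < ∞ and ∫₀^∞ ψ(s) ds < ∞. Let U, S, P, Q : [0,∞) → [0,∞) be continuous functions such that for every t ≥ 0: (Γ²/2)·U(t)² + ½·S(t)² + Γ₀Γ²·∫₀ᵗ P(s)² ds + Γ₀·∫₀ᵗ Q(s)² ds ≤ C₀ + ∫₀ᵗ g(s)Q(s) ds + Γ²·∫₀ᵗ f(s)P(s) ds + Γ²·∫₀ᵗ ψ(s)U(s) ds. Then there exists a constant C' < ∞, independent of t, such that for all t ≥ 0: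 U(t) + S(t) + ∫₀ᵗ P(s)² ds + ∫₀ᵗ Q(s)² ds ≤ C'. -/
/-!
Young's inequality with weight `Γ₀` absorbs the cross terms `g Q` and `f P` into the dissipation on
the left, at the price of the constant `K = C₀ + (‖g‖² + Γ² ‖f‖²) / (2 Γ₀)`. What remains is
`(Γ²/2) U(t)² + … ≤ K + Γ² ∫₀ᵗ ψ U`. Evaluated at a maximum point of `U` on `[0, t]`, with
`∫₀ᵗ ψ ≤ ‖ψ‖₁`, this is a quadratic inequality `(Γ²/2) M² ≤ K + Γ² ‖ψ‖₁ M` for `M = max U`, which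
bounds `U` uniformly; feeding the bound back in bounds `S` and the two dissipation integrals.
-/

open Set MeasureTheory

theorem integrable_mul_of_integrable_sq {α : Type*} [MeasurableSpace α] {μ : Measure α}
    {f g : α → ℝ} (hf : AEStronglyMeasurable f μ) (hg : AEStronglyMeasurable g μ)
    (hf2 : Integrable (fun x => f x ^ 2) μ) (hg2 : Integrable (fun x => g x ^ 2) μ) :
    Integrable (fun x => f x * g x) μ :=
  ((memLp_two_iff_integrable_sq hf).2 hf2).integrable_mul ((memLp_two_iff_integrable_sq hg).2 hg2)

theorem intervalIntegral_le_setIntegral_Ici {h : ℝ → ℝ} {a t : ℝ} (hat : a ≤ t)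
    (h0 : ∀ s ∈ Ici a, 0 ≤ h s) (hh : IntegrableOn h (Ici a)) :
    ∫ s in a..t, h s ≤ ∫ s in Ici a, h s := by
  rw [intervalIntegral.integral_of_le hat]
  exact setIntegral_mono_set hh ((ae_restrict_iff' measurableSet_Ici).2 (ae_of_all _ h0))
    (Ioc_subset_Ioi_self.trans Ioi_subset_Ici_self).eventuallyLE

theorem intervalIntegral_mul_le_young {h V : ℝ → ℝ} {a t ε : ℝ} (hat : a ≤ t) (hε : 0 < ε)
    (hh : AEStronglyMeasurable h) (hh2 : IntegrableOn (fun s => h s ^ 2) (Ici a))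
    (hV : ContinuousOn V (Icc a t)) :
    ∫ s in a..t, h s * V s ≤ (∫ s in Ici a, h s ^ 2) / (2 * ε) + ε / 2 * ∫ s in a..t, V s ^ 2 := by
  have hIoc : Ioc a t ⊆ Ici a := Ioc_subset_Ioi_self.trans Ioi_subset_Ici_self
  have ih2 : IntervalIntegrable (fun s => h s ^ 2) volume a t :=
    (intervalIntegrable_iff_integrableOn_Ioc_of_le hat).2 (hh2.mono_set hIoc)
  have iV2 : IntervalIntegrable (fun s => V s ^ 2) volume a t :=
    (hV.pow 2).intervalIntegrable_of_Icc hat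
  have ihV : IntervalIntegrable (fun s => h s * V s) volume a t := by
    rw [intervalIntegrable_iff_integrableOn_Ioc_of_le hat]
    exact integrable_mul_of_integrable_sq hh.restrict
      ((hV.mono Ioc_subset_Icc_self).aestronglyMeasurable measurableSet_Ioc)
      (hh2.mono_set hIoc) (iV2.1)
  have young : ∀ s, h s * V s ≤ h s ^ 2 / (2 * ε) + ε / 2 * V s ^ 2 := fun s => by
    rw [div_add' _ _ _ (by positivity), le_div_iff₀ (by positivity)]
    nlinarith [sq_nonneg (h s - ε * V s)]
  calc ∫ s in a..t, h s * V s
      ≤ ∫ s in a..t, (h s ^ 2 / (2 * ε) + ε / 2 * V s ^ 2) :=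
        intervalIntegral.integral_mono_on hat ihV ((ih2.div_const _).add (iV2.const_mul _))
          fun s _ => young s
    _ = (∫ s in a..t, h s ^ 2) / (2 * ε) + ε / 2 * ∫ s in a..t, V s ^ 2 := by
        rw [intervalIntegral.integral_add (ih2.div_const _) (iV2.const_mul _),
          intervalIntegral.integral_div, intervalIntegral.integral_const_mul]
    _ ≤ (∫ s in Ici a, h s ^ 2) / (2 * ε) + ε / 2 * ∫ s in a..t, V s ^ 2 := by
        gcongr
        exact intervalIntegral_le_setIntegral_Ici hat (fun s _ => sq_nonneg _) hh2

theorem intervalIntegral_mul_le_setIntegral_mul {ψ V : ℝ → ℝ} {a t M : ℝ} (hat : a ≤ t)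
    (hψ0 : ∀ s ∈ Ici a, 0 ≤ ψ s) (hψ : IntegrableOn ψ (Ici a)) (hV : ContinuousOn V (Icc a t))
    (hM : 0 ≤ M) (hVM : ∀ s ∈ Icc a t, V s ≤ M) :
    ∫ s in a..t, ψ s * V s ≤ (∫ s in Ici a, ψ s) * M := by
  have iψ : IntervalIntegrable ψ volume a t := (intervalIntegrable_iff_integrableOn_Ioc_of_le hat).2
    (hψ.mono_set (Ioc_subset_Ioi_self.trans Ioi_subset_Ici_self))
  calc ∫ s in a..t, ψ s * V s
      ≤ ∫ s in a..t, ψ s * M :=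
        intervalIntegral.integral_mono_on hat (iψ.mul_continuousOn (by rwa [uIcc_of_le hat]))
          (iψ.mul_const M) fun s hs => mul_le_mul_of_nonneg_left (hVM s hs) (hψ0 s hs.1)
    _ ≤ (∫ s in Ici a, ψ s) * M := by
        rw [intervalIntegral.integral_mul_const]
        gcongr
        exact intervalIntegral_le_setIntegral_Ici hat hψ0 hψ

theorem le_sqrt_of_mul_sq_le_add_mul {a b c x : ℝ} (ha : 0 < a) (h : a * x ^ 2 ≤ b + c * x) :
    x ≤ √((2 * a * b + c ^ 2) / a ^ 2) := by
  refine Real.le_sqrt_of_sq_le ((le_div_iff₀ (by positivity)).2 ?_)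
  nlinarith [sq_nonneg (a * x - c)]

theorem le_of_mul_sq_le_add_mul_integral {U ψ : ℝ → ℝ} {t₀ a b c : ℝ} (ha : 0 < a) (hc : 0 ≤ c)
    (hU : ContinuousOn U (Ici t₀)) (hU0 : ∀ t ∈ Ici t₀, 0 ≤ U t)
    (hψ0 : ∀ s ∈ Ici t₀, 0 ≤ ψ s) (hψ : IntegrableOn ψ (Ici t₀))
    (h : ∀ t ∈ Ici t₀, a * U t ^ 2 ≤ b + c * ∫ s in t₀..t, ψ s * U s) :
    ∀ t ∈ Ici t₀, U t ≤ √((2 * a * b + (c * ∫ s in Ici t₀, ψ s) ^ 2) / a ^ 2) := by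
  intro t ht
  -- evaluate the inequality at a point where `U` attains its maximum over `[t₀, t]`
  obtain ⟨x, hx, hxmax⟩ := isCompact_Icc.exists_isMaxOn (nonempty_Icc.2 ht)
    (hU.mono Icc_subset_Ici_self)
  have hUx : ∫ s in t₀..x, ψ s * U s ≤ (∫ s in Ici t₀, ψ s) * U x :=
    intervalIntegral_mul_le_setIntegral_mul hx.1 hψ0 hψ (hU.mono Icc_subset_Ici_self)
      (hU0 x hx.1) fun s hs => hxmax (Icc_subset_Icc_right hx.2 hs)
  calc U t ≤ U x := hxmax (right_mem_Icc.2 ht)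
    _ ≤ _ := le_sqrt_of_mul_sq_le_add_mul ha <| by
        have := h x hx.1
        have := mul_le_mul_of_nonneg_left hUx hc
        linarith

theorem add_add_le_of_sq_add_mul_add_mul_le {s p q a b L : ℝ} (ha : 0 < a) (hb : 0 < b)
    (hp : 0 ≤ p) (hq : 0 ≤ q) (h : s ^ 2 + a * p + b * q ≤ L) :
    s + p + q ≤ 1 + L + L / a + L / b := by
  have hp' : p ≤ L / a := (le_div_iff₀' ha).2 (by nlinarith [sq_nonneg s])
  have hq' : q ≤ L / b := (le_div_iff₀' hb).2 (by nlinarith [sq_nonneg s])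
  nlinarith [sq_nonneg (s - 1)]

theorem stmt_9_general (Γ Γ₀ C₀ : ℝ) (hΓ : 0 < Γ) (hΓ₀ : 0 < Γ₀)
    (f g ψ : ℝ → ℝ)
    (hψ0 : ∀ s ∈ Ici (0:ℝ), 0 ≤ ψ s)
    (hfm : Measurable f) (hgm : Measurable g)
    (hf2 : IntegrableOn (fun s => f s ^ 2) (Ici 0))
    (hg2 : IntegrableOn (fun s => g s ^ 2) (Ici 0))
    (hψ1 : IntegrableOn ψ (Ici 0))
    (U S P Q : ℝ → ℝ)
    (hUc : ContinuousOn U (Ici 0))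
    (hPc : ContinuousOn P (Ici 0)) (hQc : ContinuousOn Q (Ici 0))
    (hU0 : ∀ t ∈ Ici (0:ℝ), 0 ≤ U t)
    (hineq : ∀ t ∈ Ici (0:ℝ),
      (Γ ^ 2 / 2) * U t ^ 2 + (1 / 2) * S t ^ 2
          + Γ₀ * Γ ^ 2 * (∫ s in (0:ℝ)..t, P s ^ 2) + Γ₀ * (∫ s in (0:ℝ)..t, Q s ^ 2)
        ≤ C₀ + (∫ s in (0:ℝ)..t, g s * Q s) + Γ ^ 2 * (∫ s in (0:ℝ)..t, f s * P s)
          + Γ ^ 2 * (∫ s in (0:ℝ)..t, ψ s * U s)) :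
    ∃ C' : ℝ, ∀ t ∈ Ici (0:ℝ),
      U t + S t + (∫ s in (0:ℝ)..t, P s ^ 2) + (∫ s in (0:ℝ)..t, Q s ^ 2) ≤ C' := by
  set K := C₀ + (∫ s in Ici 0, g s ^ 2) / (2 * Γ₀) + Γ ^ 2 * ((∫ s in Ici 0, f s ^ 2) / (2 * Γ₀))
  have energy : ∀ t ∈ Ici (0:ℝ), Γ ^ 2 / 2 * U t ^ 2 + 1 / 2 * S t ^ 2
      + Γ₀ * Γ ^ 2 / 2 * (∫ s in (0:ℝ)..t, P s ^ 2) + Γ₀ / 2 * (∫ s in (0:ℝ)..t, Q s ^ 2)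
      ≤ K + Γ ^ 2 * ∫ s in (0:ℝ)..t, ψ s * U s := fun t ht => by
    have hgQ := intervalIntegral_mul_le_young ht hΓ₀ hgm.aestronglyMeasurable hg2
      (hQc.mono Icc_subset_Ici_self)
    have hfP := intervalIntegral_mul_le_young ht hΓ₀ hfm.aestronglyMeasurable hf2
      (hPc.mono Icc_subset_Ici_self)
    linear_combination hineq t ht + hgQ + Γ ^ 2 * hfP
  have hP2 : ∀ t ∈ Ici (0:ℝ), 0 ≤ ∫ s in (0:ℝ)..t, P s ^ 2 := fun t ht =>
    intervalIntegral.integral_nonneg ht fun s _ => sq_nonneg (P s)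
  have hQ2 : ∀ t ∈ Ici (0:ℝ), 0 ≤ ∫ s in (0:ℝ)..t, Q s ^ 2 := fun t ht =>
    intervalIntegral.integral_nonneg ht fun s _ => sq_nonneg (Q s)
  set M := √((2 * (Γ ^ 2 / 2) * K + (Γ ^ 2 * ∫ s in Ici 0, ψ s) ^ 2) / (Γ ^ 2 / 2) ^ 2)
  have hUM : ∀ t ∈ Ici (0:ℝ), U t ≤ M :=
    le_of_mul_sq_le_add_mul_integral (by positivity) (by positivity) hUc hU0 hψ0 hψ1
      fun t ht => by
        have hdiss := add_nonneg (mul_nonneg (by positivity : 0 ≤ Γ₀ * Γ ^ 2 / 2) (hP2 t ht))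
          (mul_nonneg (by positivity : 0 ≤ Γ₀ / 2) (hQ2 t ht))
        linarith [energy t ht, sq_nonneg (S t)]
  set L := K + Γ ^ 2 * ((∫ s in Ici 0, ψ s) * M)
  refine ⟨M + (1 + 2 * L + 2 * L / (Γ₀ * Γ ^ 2) + 2 * L / Γ₀), fun t ht => ?_⟩
  have hψU := intervalIntegral_mul_le_setIntegral_mul ht hψ0 hψ1 (hUc.mono Icc_subset_Ici_self)
    (Real.sqrt_nonneg _) fun s hs => hUM s hs.1
  have hE : S t ^ 2 + Γ₀ * Γ ^ 2 * (∫ s in (0:ℝ)..t, P s ^ 2) + Γ₀ * (∫ s in (0:ℝ)..t, Q s ^ 2)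
      ≤ 2 * L := by
    linarith [energy t ht, mul_nonneg (sq_nonneg Γ) (sq_nonneg (U t)),
      mul_le_mul_of_nonneg_left hψU (sq_nonneg Γ)]
  linarith [hUM t ht,
    add_add_le_of_sq_add_mul_add_mul_le (by positivity) hΓ₀ (hP2 t ht) (hQ2 t ht) hE]

/-- the analytic core of the long-time estimate (Lemma 5.1). -/
theorem stmt_9 (Γ Γ₀ C₀ : ℝ) (hΓ : 0 < Γ) (hΓ₀ : 0 < Γ₀) (hC₀ : 0 ≤ C₀)
    (f g ψ : ℝ → ℝ)
    (hf0 : ∀ s ∈ Ici (0:ℝ), 0 ≤ f s) (hg0 : ∀ s ∈ Ici (0:ℝ), 0 ≤ g s)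
    (hψ0 : ∀ s ∈ Ici (0:ℝ), 0 ≤ ψ s)
    (hfm : Measurable f) (hgm : Measurable g) (hψm : Measurable ψ)
    (hf2 : IntegrableOn (fun s => f s ^ 2) (Ici 0))
    (hg2 : IntegrableOn (fun s => g s ^ 2) (Ici 0))
    (hψ1 : IntegrableOn ψ (Ici 0))
    (U S P Q : ℝ → ℝ)
    (hUc : ContinuousOn U (Ici 0)) (hSc : ContinuousOn S (Ici 0))
    (hPc : ContinuousOn P (Ici 0)) (hQc : ContinuousOn Q (Ici 0))
    (hU0 : ∀ t ∈ Ici (0:ℝ), 0 ≤ U t) (hS0 : ∀ t ∈ Ici (0:ℝ), 0 ≤ S t)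
    (hP0 : ∀ t ∈ Ici (0:ℝ), 0 ≤ P t) (hQ0 : ∀ t ∈ Ici (0:ℝ), 0 ≤ Q t)
    (hineq : ∀ t ∈ Ici (0:ℝ),
      (Γ ^ 2 / 2) * U t ^ 2 + (1 / 2) * S t ^ 2
          + Γ₀ * Γ ^ 2 * (∫ s in (0:ℝ)..t, P s ^ 2) + Γ₀ * (∫ s in (0:ℝ)..t, Q s ^ 2)
        ≤ C₀ + (∫ s in (0:ℝ)..t, g s * Q s) + Γ ^ 2 * (∫ s in (0:ℝ)..t, f s * P s)
          + Γ ^ 2 * (∫ s in (0:ℝ)..t, ψ s * U s)) :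
    ∃ C' : ℝ, ∀ t ∈ Ici (0:ℝ),
      U t + S t + (∫ s in (0:ℝ)..t, P s ^ 2) + (∫ s in (0:ℝ)..t, Q s ^ 2) ≤ C' :=
  stmt_9_general Γ Γ₀ C₀ hΓ hΓ₀ f g ψ hψ0 hfm hgm hf2 hg2 hψ1 U S P Q hUc hPc hQc hU0 hineq
end
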